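/- (Symmetric Cauchy case) For a > 0, t > 0 and L > 0, with Cauchy transition density k_t(z) = t/(π(z² + t²)) and q_j(ε) := ∫₀^L k_t(y − a(j−ε)) dy, the number variance of the infinite system of independent symmetric Cauchy processes started from the equispaced-averaged configuration satisfies ∑_{j∈ℤ} ∫₀¹ q_j(ε)(1 − q_j(ε)) dε = (L/a)[1 − (2/π) arctan(L/(2t))] + (2t/(aπ)) log(1 + (L/(2t))²); moreover this expression divided by log L converges to 4t/(aπ) as L → ∞. -/

import Mathlib

open MeasureTheory Filter Set

/-- Symmetric Cauchy transition density at time `t`. -/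
noncomputable def cauchyPDF (t z : ℝ) : ℝ :=
  t / (Real.pi * (z ^ 2 + t ^ 2))

/-- Probability that the `j`-th Cauchy particle, started from `a (j - ε)`,
lies in `[0, L]` at time `t`. -/
noncomputable def hitProb (t a L : ℝ) (j : ℤ) (ε : ℝ) : ℝ :=
  ∫ y in (0:ℝ)..L, cauchyPDF t (y - a * ((j : ℝ) - ε))

/-!
Write `Q u` for the probability that a Cauchy particle started at `u` lies in `[0, L]` at time
`t`. The `j`-th term is `∫₀¹ G (a (j - ε)) dε` with `G = Q (1 - Q)`, and the intervals
`a (j - [0, 1])` tile the line, so the sum is `a⁻¹ ∫ G`. By Tonelli `∫ Q = L`, and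
`∫ Q² = ∫∫_{[0,L]²} (k_t ⋆ k_t) (y - y')`, where `k_t ⋆ k_t = k_{2t}` (Chapman–Kolmogorov, via a
partial-fraction antiderivative). This is `∫₀ᴸ Q_{2t}`, evaluated with the antiderivative
`x arctan (x / s) - (s / 2) log (1 + (x / s)²)` of `arctan (x / s)`. For the asymptotics,
`L (1 - (2 / π) arctan (L / 2t))` stays bounded while `log (1 + (L / 2t)²) ~ 2 log L`.
-/

open Real Topology Bornology
open scoped ENNReal

lemma integrable_of_hasDerivAt_of_nonneg {F Φ : ℝ → ℝ} {m n : ℝ} (hF : Continuous F)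
    (hΦ : ∀ x, HasDerivAt Φ (F x) x) (hF₀ : ∀ x, 0 ≤ F x)
    (hbot : Tendsto Φ atBot (𝓝 m)) (htop : Tendsto Φ atTop (𝓝 n)) : Integrable F := by
  refine integrable_of_intervalIntegral_norm_tendsto (n - m) (fun i => hF.integrableOn_Ioc)
    tendsto_neg_atTop_atBot tendsto_id (l := atTop) ?_
  have hFTC : ∀ i : ℝ, ∫ x in -i..id i, ‖F x‖ = Φ i - Φ (-i) := fun i => by
    simp only [Real.norm_of_nonneg (hF₀ _), id]
    exact intervalIntegral.integral_eq_sub_of_hasDerivAt (fun x _ => hΦ x)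
      (hF.intervalIntegrable _ _)
  simp only [hFTC]
  exact htop.sub (hbot.comp tendsto_neg_atTop_atBot)

lemma hasSum_intervalIntegral_comp_mul_sub {E : Type*} [NormedAddCommGroup E] [NormedSpace ℝ E]
    {G : ℝ → E} (hG : Integrable G) {a : ℝ} (ha : a ≠ 0) :
    HasSum (fun j : ℤ => ∫ ε in (0:ℝ)..1, G (a * (j - ε))) (|a|⁻¹ • ∫ u, G u) := by
  have h := (Equiv.neg ℤ).hasSum_iff.mpr
    (hG.comp_mul_left' (neg_ne_zero.mpr ha)).hasSum_intervalIntegral_comp_add_int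
  rw [Measure.integral_comp_mul_left G (-a), inv_neg, abs_neg, abs_inv] at h
  convert h using 3 with j ε
  simp only [Function.comp_apply, Equiv.neg_apply, Int.cast_neg]
  ring_nf

lemma lintegral_mul_self_lintegral {α β : Type*} [MeasurableSpace α] [MeasurableSpace β]
    {μ : Measure α} {ν : Measure β} [SFinite μ] [SFinite ν] {κ : α → β → ℝ≥0∞}
    (hκ : Measurable (Function.uncurry κ)) :
    ∫⁻ x, (∫⁻ y, κ x y ∂ν) * (∫⁻ y, κ x y ∂ν) ∂μ
      = ∫⁻ y, ∫⁻ y', ∫⁻ x, κ x y * κ x y' ∂μ ∂ν ∂ν := by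
  have hℓ : Measurable fun x => ∫⁻ y, κ x y ∂ν := hκ.lintegral_prod_right'
  calc ∫⁻ x, (∫⁻ y, κ x y ∂ν) * (∫⁻ y, κ x y ∂ν) ∂μ
      = ∫⁻ x, ∫⁻ y, κ x y * ∫⁻ y', κ x y' ∂ν ∂ν ∂μ :=
        lintegral_congr fun x => (lintegral_mul_const _ (hκ.comp measurable_prodMk_left)).symm
    _ = ∫⁻ y, ∫⁻ x, κ x y * ∫⁻ y', κ x y' ∂ν ∂μ ∂ν :=
        lintegral_lintegral_swap (hκ.mul (hℓ.comp measurable_fst)).aemeasurable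
    _ = ∫⁻ y, ∫⁻ x, ∫⁻ y', κ x y * κ x y' ∂ν ∂μ ∂ν :=
        lintegral_congr fun y => lintegral_congr fun x =>
          (lintegral_const_mul _ (hκ.comp measurable_prodMk_left)).symm
    _ = ∫⁻ y, ∫⁻ y', ∫⁻ x, κ x y * κ x y' ∂μ ∂ν ∂ν :=
        lintegral_congr fun y => lintegral_lintegral_swap
          (((hκ.comp measurable_prodMk_right).comp measurable_fst).mul hκ).aemeasurable

lemma hasDerivAt_log_sub_sq_add {s : ℝ} (hs : 0 < s) (c u : ℝ) :
    HasDerivAt (fun u => log ((u - c) ^ 2 + s)) (2 * (u - c) / ((u - c) ^ 2 + s)) u := by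
  refine ((((hasDerivAt_id' u).sub_const c).fun_pow 2).add_const s |>.log
    (by positivity)).congr_deriv ?_
  ring

lemma tendsto_log_sub_log_cobounded (p q : ℝ) {c : ℝ} (hc : 0 < c) :
    Tendsto (fun u => log ((u - p) ^ 2 + c) - log ((u - q) ^ 2 + c)) (cobounded ℝ) (𝓝 0) := by
  -- in terms of `v = u⁻¹` both logarithms shed the same `log (u ^ 2)`
  set f : ℝ → ℝ := fun v => log ((1 - p * v) ^ 2 + c * v ^ 2) - log ((1 - q * v) ^ 2 + c * v ^ 2)
  have hf : ContinuousAt f 0 := by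
    refine ((continuousAt_log ?_).comp ?_).sub ((continuousAt_log ?_).comp ?_) <;>
      first | fun_prop | norm_num
  have h := hf.tendsto.comp tendsto_inv₀_cobounded
  simp only [f, mul_zero, sub_zero, zero_pow two_ne_zero, add_zero, one_pow, sub_self] at h
  refine h.congr' ((eventually_ne_cobounded 0).mono fun u hu => ?_)
  have hsplit : ∀ r, (u - r) ^ 2 + c = u ^ 2 * ((1 - r * u⁻¹) ^ 2 + c * u⁻¹ ^ 2) := fun r => by
    field_simp
  have hpos : ∀ r, 0 < (1 - r * u⁻¹) ^ 2 + c * u⁻¹ ^ 2 := fun r => by positivity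
  simp only [Function.comp_apply, hsplit, log_mul (pow_ne_zero 2 hu) (hpos _).ne']
  ring

lemma tendsto_mul_arctan_div_atTop (b : ℝ) :
    Tendsto (fun u : ℝ => u * arctan (b / u)) atTop (𝓝 b) := by
  rcases eq_or_ne b 0 with rfl | hb
  · simp
  have hslope : Tendsto (slope arctan 0) (𝓝[≠] 0) (𝓝 1) :=
    hasDerivAt_iff_tendsto_slope.mp (by simpa using hasDerivAt_arctan 0)
  have hdiv : Tendsto (fun u : ℝ => b / u) atTop (𝓝[≠] 0) :=
    tendsto_nhdsWithin_iff.mpr ⟨tendsto_const_nhds.div_atTop tendsto_id,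
      (eventually_ne_atTop 0).mono fun u hu => div_ne_zero hb hu⟩
  have h := (hslope.comp hdiv).const_mul b
  rw [mul_one] at h
  refine h.congr' ((eventually_ne_atTop 0).mono fun u hu => ?_)
  simp only [Function.comp_apply, slope_def_field, arctan_zero, sub_zero]
  field_simp

lemma hasDerivAt_mul_arctan_div_sub_log {s : ℝ} (hs : 0 < s) (x : ℝ) :
    HasDerivAt (fun x => x * arctan (x / s) - s / 2 * log (1 + (x / s) ^ 2))
      (arctan (x / s)) x := by
  have hdiv := (hasDerivAt_id' x).div_const s
  refine (((hasDerivAt_id' x).mul hdiv.arctan).sub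
    ((((hdiv.fun_pow 2).const_add 1).log (by positivity)).const_mul _)).congr_deriv ?_
  have hs' := hs.ne'
  simp only [Nat.cast_ofNat, Nat.reduceSub, pow_one]
  field_simp
  ring

lemma integrable_and_integral_eq_of_lintegral_ofReal {α : Type*} [MeasurableSpace α]
    {μ : Measure α} {f : α → ℝ} {c : ℝ} (hfm : AEStronglyMeasurable f μ) (hf : 0 ≤ᵐ[μ] f)
    (hc : 0 ≤ c) (h : ∫⁻ x, ENNReal.ofReal (f x) ∂μ = ENNReal.ofReal c) :
    Integrable f μ ∧ ∫ x, f x ∂μ = c :=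
  ⟨(lintegral_ofReal_ne_top_iff_integrable hfm hf).mp (h ▸ ENNReal.ofReal_ne_top),
    by rw [integral_eq_lintegral_of_nonneg_ae hf hfm, h, ENNReal.toReal_ofReal hc]⟩

section Cauchy

variable {t : ℝ}

lemma cauchyPDF_nonneg (ht : 0 ≤ t) (z : ℝ) : 0 ≤ cauchyPDF t z := by
  unfold cauchyPDF; positivity

lemma cauchyPDF_neg (t z : ℝ) : cauchyPDF t (-z) = cauchyPDF t z := by
  simp [cauchyPDF]

lemma continuous_cauchyPDF (ht : 0 < t) : Continuous (cauchyPDF t) :=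
  continuous_const.div (by fun_prop) fun z => by positivity

lemma cauchyPDF_sub_eq_cauchyPDFReal (ht : 0 ≤ t) (x x₀ : ℝ) :
    cauchyPDF t (x - x₀) = ProbabilityTheory.cauchyPDFReal x₀ t.toNNReal x := by
  rw [ProbabilityTheory.cauchyPDFReal_def, Real.coe_toNNReal t ht, cauchyPDF]
  field_simp

lemma lintegral_cauchyPDF_sub_left (ht : 0 < t) (x : ℝ) :
    ∫⁻ u, ENNReal.ofReal (cauchyPDF t (x - u)) = 1 := by
  simp_rw [← neg_sub _ x, cauchyPDF_neg, cauchyPDF_sub_eq_cauchyPDFReal ht.le]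
  exact ProbabilityTheory.lintegral_cauchyPDF_eq_one x (by simpa using ht)

lemma hasDerivAt_arctan_sub_div (ht : 0 < t) (c u : ℝ) :
    HasDerivAt (fun u => arctan ((u - c) / t)) (π * cauchyPDF t (u - c)) u := by
  refine ((((hasDerivAt_id' u).sub_const c).div_const t).arctan).congr_deriv ?_
  simp only [cauchyPDF]
  field_simp
  ring

lemma tendsto_arctan_sub_div_atTop (ht : 0 < t) (c : ℝ) :
    Tendsto (fun u => arctan ((u - c) / t)) atTop (𝓝 (π / 2)) :=
  tendsto_nhds_of_tendsto_nhdsWithin <| tendsto_arctan_atTop.comp <|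
    (tendsto_atTop_add_const_right _ (-c) tendsto_id).atTop_div_const ht

lemma tendsto_arctan_sub_div_atBot (ht : 0 < t) (c : ℝ) :
    Tendsto (fun u => arctan ((u - c) / t)) atBot (𝓝 (-(π / 2))) :=
  tendsto_nhds_of_tendsto_nhdsWithin <| tendsto_arctan_atBot.comp <|
    (tendsto_atBot_add_const_right _ (-c) tendsto_id).atBot_div_const ht

end Cauchy

section ChapmanKolmogorov

variable {t : ℝ}

theorem lintegral_cauchyPDF_mul_cauchyPDF (ht : 0 < t) {x y : ℝ} (hxy : x ≠ y) :
    ∫⁻ u, ENNReal.ofReal (cauchyPDF t (x - u)) * ENNReal.ofReal (cauchyPDF t (y - u))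
      = ENNReal.ofReal (cauchyPDF (2 * t) (x - y)) := by
  have hd : x - y ≠ 0 := sub_ne_zero.mpr hxy
  set F : ℝ → ℝ := fun u => cauchyPDF t (x - u) * cauchyPDF t (y - u)
  -- found by partial fractions; it tends to `± t / (π ((x - y) ^ 2 + 4 t ^ 2))` at `±∞`
  set Φ : ℝ → ℝ := fun u => t / (π ^ 2 * ((x - y) ^ 2 + 4 * t ^ 2)) *
    (t / (x - y) * (log ((u - y) ^ 2 + t ^ 2) - log ((u - x) ^ 2 + t ^ 2))
      + (arctan ((u - y) / t) + arctan ((u - x) / t)))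
  have ht2 : 0 < t ^ 2 := by positivity
  have hΦ : ∀ u, HasDerivAt Φ (F u) u := fun u => by
    have hlog' := (hasDerivAt_log_sub_sq_add ht2 y u).sub (hasDerivAt_log_sub_sq_add ht2 x u)
    have harctan := (hasDerivAt_arctan_sub_div ht y u).add (hasDerivAt_arctan_sub_div ht x u)
    refine ((hlog'.const_mul _).add harctan).const_mul _ |>.congr_deriv ?_
    simp only [F, cauchyPDF]
    field_simp
    ring
  have hF : Continuous F := by
    have hk := continuous_cauchyPDF ht
    exact (hk.comp (by fun_prop)).mul (hk.comp (by fun_prop))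
  have hF₀ : ∀ u, 0 ≤ F u := fun u =>
    mul_nonneg (cauchyPDF_nonneg ht.le _) (cauchyPDF_nonneg ht.le _)
  have hlog := tendsto_log_sub_log_cobounded y x ht2
  have htop : Tendsto Φ atTop (𝓝 (t / (π ^ 2 * ((x - y) ^ 2 + 4 * t ^ 2)) *
      (t / (x - y) * 0 + (π / 2 + π / 2)))) :=
    (((hlog.mono_left IsOrderBornology.atTop_le_cobounded).const_mul _).add
      ((tendsto_arctan_sub_div_atTop ht y).add (tendsto_arctan_sub_div_atTop ht x))).const_mul _
  have hbot : Tendsto Φ atBot (𝓝 (t / (π ^ 2 * ((x - y) ^ 2 + 4 * t ^ 2)) *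
      (t / (x - y) * 0 + (-(π / 2) + -(π / 2))))) :=
    (((hlog.mono_left IsOrderBornology.atBot_le_cobounded).const_mul _).add
      ((tendsto_arctan_sub_div_atBot ht y).add (tendsto_arctan_sub_div_atBot ht x))).const_mul _
  have hint := integrable_of_hasDerivAt_of_nonneg hF hΦ hF₀ hbot htop
  simp_rw [← ENNReal.ofReal_mul (cauchyPDF_nonneg ht.le _)]
  rw [← ofReal_integral_eq_lintegral_ofReal hint (ae_of_all _ hF₀),
    integral_of_hasDerivAt_of_tendsto hΦ hint hbot htop]
  congr 1
  simp only [cauchyPDF]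
  field_simp
  ring

end ChapmanKolmogorov

noncomputable def cauchyIntervalProb (t L u : ℝ) : ℝ :=
  ∫ y in (0:ℝ)..L, cauchyPDF t (y - u)

section IntervalProb

variable {t L : ℝ}

lemma hitProb_eq_cauchyIntervalProb (t a L : ℝ) (j : ℤ) (ε : ℝ) :
    hitProb t a L j ε = cauchyIntervalProb t L (a * (j - ε)) := rfl

lemma cauchyIntervalProb_eq_arctan (t L u : ℝ) :
    cauchyIntervalProb t L u = (arctan ((L - u) / t) + arctan (u / t)) / π := by
  have hk : ∀ z, cauchyPDF t z = π⁻¹ * (t / (t ^ 2 + z ^ 2)) := fun z => by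
    simp only [cauchyPDF]; field_simp; ring
  simp only [cauchyIntervalProb, hk, intervalIntegral.integral_const_mul,
    intervalIntegral.integral_comp_sub_right (fun z => t / (t ^ 2 + z ^ 2)),
    integral_div_sq_add_sq, zero_sub, neg_div, arctan_neg]
  ring

lemma cauchyIntervalProb_nonneg (ht : 0 ≤ t) (hL : 0 ≤ L) (u : ℝ) :
    0 ≤ cauchyIntervalProb t L u :=
  intervalIntegral.integral_nonneg hL fun _ _ => cauchyPDF_nonneg ht _

lemma continuous_cauchyIntervalProb (t L : ℝ) : Continuous (cauchyIntervalProb t L) := by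
  simp_rw [funext (cauchyIntervalProb_eq_arctan t L)]
  fun_prop

lemma ofReal_cauchyIntervalProb (ht : 0 < t) (hL : 0 ≤ L) (u : ℝ) :
    ENNReal.ofReal (cauchyIntervalProb t L u)
      = ∫⁻ y in Ioc 0 L, ENNReal.ofReal (cauchyPDF t (y - u)) := by
  rw [cauchyIntervalProb, intervalIntegral.integral_of_le hL]
  exact ofReal_integral_eq_lintegral_ofReal
    ((continuous_cauchyPDF ht).comp (continuous_sub_right u)).integrableOn_Ioc
    (ae_of_all _ fun _ => cauchyPDF_nonneg ht.le _)

lemma measurable_ofReal_cauchyPDF_sub (ht : 0 < t) :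
    Measurable fun p : ℝ × ℝ => ENNReal.ofReal (cauchyPDF t (p.2 - p.1)) :=
  ((continuous_cauchyPDF ht).comp (by fun_prop)).measurable.ennreal_ofReal

lemma lintegral_cauchyIntervalProb (ht : 0 < t) (hL : 0 ≤ L) :
    ∫⁻ u, ENNReal.ofReal (cauchyIntervalProb t L u) = ENNReal.ofReal L := by
  simp_rw [ofReal_cauchyIntervalProb ht hL]
  rw [lintegral_lintegral_swap (measurable_ofReal_cauchyPDF_sub ht).aemeasurable]
  simp [lintegral_cauchyPDF_sub_left ht]

lemma lintegral_cauchyIntervalProb_sq (ht : 0 < t) (hL : 0 ≤ L) :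
    ∫⁻ u, ENNReal.ofReal (cauchyIntervalProb t L u ^ 2)
      = ENNReal.ofReal (∫ y in (0:ℝ)..L, cauchyIntervalProb (2 * t) L y) := by
  have h2t : 0 < 2 * t := by positivity
  simp_rw [sq, ENNReal.ofReal_mul (cauchyIntervalProb_nonneg ht.le hL _),
    ofReal_cauchyIntervalProb ht hL]
  rw [lintegral_mul_self_lintegral (measurable_ofReal_cauchyPDF_sub ht),
    intervalIntegral.integral_of_le hL, ofReal_integral_eq_lintegral_ofReal
      (continuous_cauchyIntervalProb _ L).integrableOn_Ioc
      (ae_of_all _ (cauchyIntervalProb_nonneg h2t.le hL))]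
  refine lintegral_congr fun y => ?_
  rw [ofReal_cauchyIntervalProb h2t hL]
  -- the antiderivative behind Chapman–Kolmogorov degenerates on the null diagonal `y' = y`
  refine lintegral_congr_ae ?_
  filter_upwards [ae_restrict_of_ae (volume.ae_ne y)] with y' hy'
  rw [lintegral_cauchyPDF_mul_cauchyPDF ht (Ne.symm hy'), ← neg_sub, cauchyPDF_neg]

end IntervalProb

lemma intervalIntegral_cauchyIntervalProb {s : ℝ} (hs : 0 < s) (L : ℝ) :
    ∫ y in (0:ℝ)..L, cauchyIntervalProb s L y
      = 2 / π * (L * arctan (L / s) - s / 2 * log (1 + (L / s) ^ 2)) := by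
  have hc : Continuous fun y => arctan (y / s) := by fun_prop
  have hc' : Continuous fun y => arctan ((L - y) / s) := by fun_prop
  have harctan : ∫ y in (0:ℝ)..L, arctan (y / s)
      = L * arctan (L / s) - s / 2 * log (1 + (L / s) ^ 2) := by
    rw [intervalIntegral.integral_eq_sub_of_hasDerivAt
      (fun x _ => hasDerivAt_mul_arctan_div_sub_log hs x) (hc.intervalIntegrable 0 L)]
    simp
  have hreflect : ∫ y in (0:ℝ)..L, arctan ((L - y) / s) = ∫ y in (0:ℝ)..L, arctan (y / s) := by
    simpa using intervalIntegral.integral_comp_sub_left (fun y => arctan (y / s)) L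
      (a := 0) (b := L)
  simp_rw [cauchyIntervalProb_eq_arctan, div_eq_mul_inv _ π]
  rw [intervalIntegral.integral_mul_const, intervalIntegral.integral_add
    (hc'.intervalIntegrable 0 L) (hc.intervalIntegrable 0 L),
    hreflect, harctan]
  ring

theorem tsum_integral_hitProb_mul_one_sub {a t L : ℝ} (ha : 0 < a) (ht : 0 < t) (hL : 0 ≤ L) :
    ∑' j : ℤ, ∫ ε in (0:ℝ)..1, hitProb t a L j ε * (1 - hitProb t a L j ε)
      = (L / a) * (1 - (2 / π) * arctan (L / (2 * t))) +
          (2 * t / (a * π)) * log (1 + (L / (2 * t)) ^ 2) := by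
  set Q := cauchyIntervalProb t L
  have hQ₀ : ∀ u, 0 ≤ Q u := cauchyIntervalProb_nonneg ht.le hL
  have hQc : Continuous Q := continuous_cauchyIntervalProb t L
  obtain ⟨hQ, hQ_int⟩ := integrable_and_integral_eq_of_lintegral_ofReal hQc.aestronglyMeasurable
    (ae_of_all _ hQ₀) hL (lintegral_cauchyIntervalProb ht hL)
  obtain ⟨hQ2, hQ2_int⟩ := integrable_and_integral_eq_of_lintegral_ofReal (f := fun u => Q u ^ 2)
    (hQc.pow 2).aestronglyMeasurable (ae_of_all _ fun u => sq_nonneg (Q u))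
    (intervalIntegral.integral_nonneg hL fun y _ => cauchyIntervalProb_nonneg (by positivity) hL y)
    (lintegral_cauchyIntervalProb_sq ht hL)
  have hG : (fun u => Q u * (1 - Q u)) = fun u => Q u - Q u ^ 2 := by
    funext u; ring
  have hG_int : Integrable fun u => Q u * (1 - Q u) := by
    rw [hG]
    exact hQ.sub hQ2
  simp_rw [hitProb_eq_cauchyIntervalProb]
  refine (hasSum_intervalIntegral_comp_mul_sub hG_int ha.ne').tsum_eq.trans ?_
  rw [hG, integral_sub hQ hQ2, hQ_int, hQ2_int, intervalIntegral_cauchyIntervalProb (by positivity),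
    abs_of_pos ha, smul_eq_mul]
  field_simp
  ring

lemma tendsto_mul_one_sub_arctan_div_atTop {s : ℝ} (hs : 0 < s) :
    Tendsto (fun L => L * (1 - 2 / π * arctan (L / s))) atTop (𝓝 (2 * s / π)) := by
  have h := (tendsto_mul_arctan_div_atTop s).const_mul (2 / π)
  rw [show 2 / π * s = 2 * s / π by ring] at h
  refine h.congr' ((eventually_gt_atTop 0).mono fun L hL => ?_)
  dsimp only
  rw [← inv_div s L, arctan_inv_of_pos (by positivity)]
  field_simp
  ring

lemma tendsto_log_one_add_div_sq_div_log_atTop {s : ℝ} (hs : 0 < s) :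
    Tendsto (fun L => log (1 + (L / s) ^ 2) / log L) atTop (𝓝 2) := by
  have hratio : Tendsto (fun L => log ((1 + (L / s) ^ 2) / L ^ 2)) atTop (𝓝 (log (s ^ 2)⁻¹)) := by
    refine ((continuousAt_log (by positivity)).tendsto.comp ?_)
    have h := (tendsto_inv_atTop_zero.pow 2).add_const (s ^ 2)⁻¹
    rw [zero_pow two_ne_zero, zero_add] at h
    refine h.congr' ((eventually_ne_atTop 0).mono fun L hL => ?_)
    field_simp
  have h := (hratio.div_atTop tendsto_log_atTop).const_add 2
  rw [add_zero] at h
  refine h.congr' ((eventually_gt_atTop 1).mono fun L hL => ?_)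
  have hlog : log (1 + (L / s) ^ 2) = 2 * log L + log ((1 + (L / s) ^ 2) / L ^ 2) := by
    rw [log_div (by positivity) (by positivity), log_pow]
    push_cast
    ring
  dsimp only
  rw [hlog, add_div (2 * log L), mul_div_cancel_right₀ _ (log_pos hL).ne']

theorem tendsto_numVar_div_log_atTop {a t : ℝ} (ht : 0 < t) :
    Tendsto (fun L : ℝ =>
        ((L / a) * (1 - (2 / π) * arctan (L / (2 * t))) +
          (2 * t / (a * π)) * log (1 + (L / (2 * t)) ^ 2)) / log L)
      atTop (𝓝 (4 * t / (a * π))) := by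
  have h2t : 0 < 2 * t := by positivity
  have h := ((((tendsto_mul_one_sub_arctan_div_atTop h2t).div_atTop tendsto_log_atTop).const_mul
    a⁻¹).add ((tendsto_log_one_add_div_sq_div_log_atTop h2t).const_mul (2 * t / (a * π))))
  rw [mul_zero, zero_add, show 2 * t / (a * π) * 2 = 4 * t / (a * π) by ring] at h
  refine h.congr fun L => ?_
  ring

theorem cauchy_numVar (a t : ℝ) (ha : 0 < a) (ht : 0 < t) :
    (∀ L : ℝ, 0 < L →
      (∑' j : ℤ, ∫ ε in (0:ℝ)..1, hitProb t a L j ε * (1 - hitProb t a L j ε)) =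
        (L / a) * (1 - (2 / Real.pi) * Real.arctan (L / (2 * t))) +
          (2 * t / (a * Real.pi)) * Real.log (1 + (L / (2 * t)) ^ 2)) ∧
    Tendsto (fun L : ℝ =>
        ((L / a) * (1 - (2 / Real.pi) * Real.arctan (L / (2 * t))) +
          (2 * t / (a * Real.pi)) * Real.log (1 + (L / (2 * t)) ^ 2)) / Real.log L)
      atTop (nhds (4 * t / (a * Real.pi))) :=
  ⟨fun _ hL => tsum_integral_hitProb_mul_one_sub ha ht hL.le, tendsto_numVar_div_log_atTop ht⟩
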